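/- Let n ≥ 2 and N be integers with 2 ≤ N ≤ n+1, and let z_1, …, z_N be points on the unit sphere S^{n-1} ⊂ ℝ^n. Then the sum of distances satisfies Σ_{i=1}^N Σ_{j=1}^N ‖z_i − z_j‖ ≤ N·√(2N(N−1)). -/

import Mathlib

/-!
Expanding `‖zᵢ - zⱼ‖² = 2 - 2⟪zᵢ, zⱼ⟫` gives `Σᵢⱼ ‖zᵢ - zⱼ‖² = 2N² - 2‖Σᵢ zᵢ‖² ≤ 2N²`.
The `N(N - 1)` off-diagonal terms carry the whole distance sum, so Cauchy–Schwarz gives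
`(Σᵢⱼ ‖zᵢ - zⱼ‖)² ≤ N(N - 1) · 2N²`.
-/

open Finset

section InnerProductSpace

variable {ι E : Type*} [Fintype ι] [NormedAddCommGroup E] [InnerProductSpace ℝ E]

theorem sum_sum_norm_sub_sq (z : ι → E) :
    ∑ i, ∑ j, ‖z i - z j‖ ^ 2 =
      2 * Fintype.card ι * ∑ i, ‖z i‖ ^ 2 - 2 * ‖∑ i, z i‖ ^ 2 := by
  have h_inner : ∑ i, ∑ j, inner ℝ (z i) (z j) = ‖∑ i, z i‖ ^ 2 := by
    rw [← real_inner_self_eq_norm_sq, sum_inner]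
    simp only [inner_sum]
  simp only [norm_sub_sq_real, sum_add_distrib, sum_sub_distrib, ← mul_sum, h_inner,
    sum_const, card_univ, nsmul_eq_mul]
  ring

theorem sum_sum_norm_sub_sq_le (z : ι → E) (hz : ∀ i, ‖z i‖ ≤ 1) :
    ∑ i, ∑ j, ‖z i - z j‖ ^ 2 ≤ 2 * (Fintype.card ι : ℝ) ^ 2 := by
  have h_sq : ∑ i, ‖z i‖ ^ 2 ≤ Fintype.card ι := by
    simpa using sum_le_sum fun i (_ : i ∈ univ) ↦ pow_le_one₀ (norm_nonneg (z i)) (hz i)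
  rw [sum_sum_norm_sub_sq]
  nlinarith [sq_nonneg ‖∑ i, z i‖]

end InnerProductSpace

theorem sq_sum_sum_le_of_diag_eq_zero {ι : Type*} [Fintype ι]
    (f : ι → ι → ℝ) (hf : ∀ i, f i i = 0) :
    (∑ i, ∑ j, f i j) ^ 2 ≤
      (Fintype.card ι * (Fintype.card ι - 1) : ℝ) * ∑ i, ∑ j, f i j ^ 2 := by
  have h_offDiag : ∑ i, ∑ j, f i j = ∑ p ∈ (univ : Finset ι).offDiag, f p.1 p.2 := by
    rw [← sum_product']
    refine (sum_subset (fun _ _ ↦ by simp) fun p _ hp ↦ ?_).symm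
    simp_all
  have h_card : (#(univ : Finset ι).offDiag : ℝ) = Fintype.card ι * (Fintype.card ι - 1) := by
    rw [offDiag_card, card_univ, Nat.cast_sub (Nat.le_mul_self _)]
    push_cast
    ring
  have h_sq : ∑ p ∈ (univ : Finset ι).offDiag, f p.1 p.2 ^ 2 ≤ ∑ i, ∑ j, f i j ^ 2 := by
    rw [← sum_product']
    exact sum_le_sum_of_subset_of_nonneg (fun _ _ ↦ by simp) fun _ _ _ ↦ sq_nonneg _
  rw [h_offDiag, ← h_card]
  exact sq_sum_le_card_mul_sum_sq.trans (mul_le_mul_of_nonneg_left h_sq (Nat.cast_nonneg _))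

theorem sum_dist_le_tau1 (n N : ℕ)
    (z : Fin N → EuclideanSpace ℝ (Fin n)) (hz : ∀ i, ‖z i‖ = 1) :
    ∑ i, ∑ j, ‖z i - z j‖ ≤ (N : ℝ) * Real.sqrt (2 * N * (N - 1)) := by
  have h_sq_sum := sum_sum_norm_sub_sq_le z fun i ↦ (hz i).le
  have h_cs := sq_sum_sum_le_of_diag_eq_zero (fun i j ↦ ‖z i - z j‖) (by simp)
  simp only [Fintype.card_fin] at h_sq_sum h_cs
  have h_card : (0 : ℝ) ≤ N * (N - 1) := by
    rcases N with _ | N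
    · simp
    · push_cast
      nlinarith
  have h_bound : (∑ i, ∑ j, ‖z i - z j‖) ^ 2 ≤ (N : ℝ) ^ 2 * (2 * N * (N - 1)) := by
    nlinarith [mul_le_mul_of_nonneg_left h_sq_sum h_card]
  calc ∑ i, ∑ j, ‖z i - z j‖ ≤ Real.sqrt ((N : ℝ) ^ 2 * (2 * N * (N - 1))) :=
        (le_abs_self _).trans (Real.abs_le_sqrt h_bound)
    _ = N * Real.sqrt (2 * N * (N - 1)) := by
        rw [Real.sqrt_mul (sq_nonneg _), Real.sqrt_sq (Nat.cast_nonneg _)]
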